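/- The bisubmodular polyhedron P₊(f) is nonempty for any bisubmodular f with f(∅,∅)=0. -/

import Mathlib

open Finset

/-! The set function `g S = f(S, ∅)` is submodular, so its greedy vector
`x i = g(Iic i) - g(Iio i)` satisfies `x(X) ≤ g(X)` for every `X`, with equality for `X = univ`
by telescoping; hence `x(Y) ≥ g(univ) - g(univ \ Y)`. Bisubmodularity applied to `(univ, ∅)` and
`(X, Y)` gives `g(univ \ Y) + g(X) ≤ g(univ) + f(X, Y)`, and the three inequalities combine to
`x(X) - x(Y) ≤ f(X, Y)`. -/

def IsSubmodular {α : Type*} [DecidableEq α] (g : Finset α → ℝ) : Prop :=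
  ∀ A B : Finset α, g (A ∪ B) + g (A ∩ B) ≤ g A + g B

section Greedy

variable {ι : Type*} [LinearOrder ι] [LocallyFiniteOrderBot ι]

def greedyVector (g : Finset ι → ℝ) (i : ι) : ℝ := g (Iic i) - g (Iio i)

theorem IsSubmodular.sum_greedyVector_le {g : Finset ι → ℝ} (hg : IsSubmodular g)
    (X : Finset ι) : ∑ i ∈ X, greedyVector g i ≤ g X - g ∅ := by
  induction X using Finset.induction_on_max with
  | empty => simp
  | insert a s hs ih =>
    have ha : a ∉ s := fun h => lt_irrefl a (hs a h)
    have hunion : insert a s ∪ Iio a = Iic a := by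
      ext i
      simp only [mem_union, mem_insert, mem_Iio, mem_Iic]
      constructor
      · rintro ((rfl | h) | h)
        exacts [le_rfl, (hs i h).le, h.le]
      · intro h
        rcases h.lt_or_eq with h | rfl
        exacts [Or.inr h, Or.inl (Or.inl rfl)]
    have hinter : insert a s ∩ Iio a = s := by
      ext i
      simp only [mem_inter, mem_insert, mem_Iio]
      constructor
      · rintro ⟨rfl | h, h'⟩
        exacts [absurd h' (lt_irrefl _), h]
      · exact fun h => ⟨Or.inr h, hs i h⟩
    have key := hg (insert a s) (Iio a)
    rw [hunion, hinter] at key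
    rw [sum_insert ha, greedyVector]
    linarith

theorem sum_greedyVector_of_isLowerSet (g : Finset ι → ℝ) {X : Finset ι}
    (hX : IsLowerSet (X : Set ι)) : ∑ i ∈ X, greedyVector g i = g X - g ∅ := by
  induction X using Finset.induction_on_max with
  | empty => simp
  | insert a s hs ih =>
    have ha : a ∉ s := fun h => lt_irrefl a (hs a h)
    have hIio : s = Iio a := by
      ext i
      refine ⟨fun h => mem_Iio.2 (hs i h), fun h => ?_⟩
      have := hX (mem_Iio.1 h).le (by simp)
      simp only [coe_insert, Set.mem_insert_iff, mem_coe] at this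
      exact this.resolve_left (mem_Iio.1 h).ne
    have hIic : insert a s = Iic a := by
      rw [hIio, ← Iio_insert]
    have hs_lower : IsLowerSet (s : Set ι) := by
      rw [hIio, coe_Iio]; exact isLowerSet_Iio a
    rw [sum_insert ha, ih hs_lower, greedyVector, ← hIic, ← hIio]
    ring

theorem IsSubmodular.sub_le_sum_greedyVector [Fintype ι] {g : Finset ι → ℝ}
    (hg : IsSubmodular g) (Y : Finset ι) :
    g univ - g (univ \ Y) ≤ ∑ i ∈ Y, greedyVector g i := by
  have htotal := sum_greedyVector_of_isLowerSet g (X := univ) (by simp [isLowerSet_univ])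
  have hrest := hg.sum_greedyVector_le (univ \ Y)
  rw [← sum_sdiff (subset_univ Y)] at htotal
  linarith

end Greedy

/-- The bisubmodular polyhedron `P₊(f)` is nonempty. -/
theorem polyhedron_nonempty {n : ℕ} (f : Finset (Fin n) → Finset (Fin n) → ℝ)
    (hbi : ∀ X₁ Y₁ X₂ Y₂ : Finset (Fin n), Disjoint X₁ Y₁ → Disjoint X₂ Y₂ →
      f ((X₁ ∪ X₂) \ (Y₁ ∪ Y₂)) ((Y₁ ∪ Y₂) \ (X₁ ∪ X₂)) + f (X₁ ∩ X₂) (Y₁ ∩ Y₂)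
        ≤ f X₁ Y₁ + f X₂ Y₂)
    (hf0 : f ∅ ∅ = 0) :
    {x : Fin n → ℝ | ∀ X Y : Finset (Fin n), Disjoint X Y →
      ∑ i ∈ X, x i - ∑ i ∈ Y, x i ≤ f X Y}.Nonempty := by
  set g : Finset (Fin n) → ℝ := fun S => f S ∅
  have hg : IsSubmodular g := fun A B => by
    simpa using hbi A ∅ B ∅ (disjoint_empty_right _) (disjoint_empty_right _)
  refine ⟨greedyVector g, fun X Y hXY => ?_⟩
  have hsplit : f (univ \ Y) ∅ + f X ∅ ≤ f univ ∅ + f X Y := by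
    have h := hbi univ ∅ X Y (disjoint_empty_right _) hXY
    rwa [union_eq_left.2 (subset_univ X), empty_union, sdiff_eq_empty_iff_subset.2 (subset_univ Y),
      univ_inter, empty_inter] at h
  have hX := hg.sum_greedyVector_le X
  have hY := hg.sub_le_sum_greedyVector Y
  simp only [g, hf0] at hX hY
  linarith
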